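/- arXiv:1903.00471 — 6 statements merged into one kernel-verified Lean document; each statement's English description precedes it below -/
import Mathlib

section
/- Let A be an irreducible matrix with entries in {0}∪μ_n indexed by X × Y. If D and E are diagonal matrices with entries in μ_n (indexed by X and Y respectively) such that D A E* = A, then D and E are both scalar matrices with the same scalar value; i.e. there exists ζ ∈ μ_n with D = ζI and E = ζI. -/
open Matrix ComplexConjugate

/-!
Comparing entries, `D A E* = A` says `d x * A x y * conj (e y) = A x y`; since `|e y| = 1`, this
forces `d x = e y` whenever `A x y ≠ 0`. Thus `Sum.elim d e` is constant along the edges of the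
bipartite support graph of `A`, hence constant on it because that graph is connected.
-/

theorem SimpleGraph.Preconnected.eq_of_forall_adj {V β : Type*} {G : SimpleGraph V}
    (hG : G.Preconnected) {f : V → β} (hf : ∀ u v, G.Adj u v → f u = f v) (u v : V) :
    f u = f v := by
  obtain ⟨p⟩ := hG u v
  induction p with
  | nil => rfl
  | cons h _ ih => exact (hf _ _ h).trans ih

namespace Matrix

variable {X Y R : Type*}

def bipartiteSupportGraph [Zero R] (A : Matrix X Y R) : SimpleGraph (X ⊕ Y) :=
  SimpleGraph.fromRel fun u v => ∃ x y, A x y ≠ 0 ∧ u = Sum.inl x ∧ v = Sum.inr y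

theorem sumElim_eq_of_bipartiteSupportGraph_adj {β : Type*} [Zero R] {A : Matrix X Y R}
    {d : X → β} {e : Y → β} (hde : ∀ x y, A x y ≠ 0 → d x = e y) {u v : X ⊕ Y}
    (huv : A.bipartiteSupportGraph.Adj u v) : Sum.elim d e u = Sum.elim d e v := by
  rcases huv.2 with ⟨x, y, hA, rfl, rfl⟩ | ⟨x, y, hA, rfl, rfl⟩
  · exact hde x y hA
  · exact (hde x y hA).symm

theorem diagonal_mul_mul_conjTranspose_diagonal_apply [Fintype X] [Fintype Y] [DecidableEq X]
    [DecidableEq Y] [CommSemiring R] [StarRing R] (d : X → R) (A : Matrix X Y R) (e : Y → R)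
    (x : X) (y : Y) : (diagonal d * A * (diagonal e)ᴴ) x y = d x * A x y * star (e y) := by
  rw [diagonal_conjTranspose, mul_diagonal, diagonal_mul]
  rfl

end Matrix

theorem Complex.eq_of_mul_mul_conj_eq_self {a b c : ℂ} (ha : a ≠ 0) (hc : ‖c‖ = 1)
    (h : b * a * conj c = a) : b = c := by
  have hcc : conj c * c = 1 := by
    rw [Complex.conj_mul', hc]
    norm_num
  have hbc : b * conj c = 1 :=
    mul_left_cancel₀ ha (by linear_combination h)
  calc b = b * (conj c * c) := by rw [hcc, mul_one]
    _ = c := by rw [← mul_assoc, hbc, one_mul]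

theorem stmt_1_general {X Y : Type*} [Fintype X] [Fintype Y] [DecidableEq X] [DecidableEq Y]
    (n : ℕ) (hn : 0 < n) (A : Matrix X Y ℂ)
    (hirr : (SimpleGraph.fromRel (fun u v : X ⊕ Y =>
        ∃ x y, A x y ≠ 0 ∧ u = Sum.inl x ∧ v = Sum.inr y)).Connected)
    (d : X → ℂ) (e : Y → ℂ) (hd : ∀ x, (d x) ^ n = 1) (he : ∀ y, (e y) ^ n = 1)
    (hDE : Matrix.diagonal d * A * (Matrix.diagonal e)ᴴ = A) :
    ∃ ζ : ℂ, ζ ^ n = 1 ∧ (∀ x, d x = ζ) ∧ (∀ y, e y = ζ) := by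
  have hde : ∀ x y, A x y ≠ 0 → d x = e y := fun x y hA => by
    refine Complex.eq_of_mul_mul_conj_eq_self hA
      (Complex.norm_eq_one_of_pow_eq_one (he y) hn.ne') ?_
    simpa only [diagonal_mul_mul_conjTranspose_diagonal_apply, Complex.star_def] using congrFun₂ hDE x y
  have hconst : ∀ u v, Sum.elim d e u = Sum.elim d e v :=
    hirr.preconnected.eq_of_forall_adj fun _ _ => sumElim_eq_of_bipartiteSupportGraph_adj hde
  obtain ⟨v₀⟩ := hirr.nonempty
  refine ⟨Sum.elim d e v₀, ?_, fun x => hconst (.inl x) v₀, fun y => hconst (.inr y) v₀⟩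
  cases v₀ with
  | inl x => exact hd x
  | inr y => exact he y

/-- If `A` is irreducible (its bipartite graph is connected) with entries in
{0} ∪ μ_n, and diagonal μ_n-matrices `D`, `E` satisfy `D A E* = A`, then `D` and `E` are
scalar matrices with the same scalar value ζ ∈ μ_n. -/
theorem stmt_1 {X Y : Type*} [Fintype X] [Fintype Y] [DecidableEq X] [DecidableEq Y]
    (n : ℕ) (hn : 0 < n) (A : Matrix X Y ℂ)
    (hent : ∀ x y, A x y = 0 ∨ (A x y) ^ n = 1)
    (hirr : (SimpleGraph.fromRel (fun u v : X ⊕ Y =>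
        ∃ x y, A x y ≠ 0 ∧ u = Sum.inl x ∧ v = Sum.inr y)).Connected)
    (d : X → ℂ) (e : Y → ℂ) (hd : ∀ x, (d x) ^ n = 1) (he : ∀ y, (e y) ^ n = 1)
    (hDE : Matrix.diagonal d * A * (Matrix.diagonal e)ᴴ = A) :
    ∃ ζ : ℂ, ζ ^ n = 1 ∧ (∀ x, d x = ζ) ∧ (∀ y, e y = ζ) :=
  stmt_1_general n hn A hirr d e hd he hDE
end

section
/- Let G be a finite group acting on finite sets X and Y, and let 𝒪 ⊆ X × Y be a G-stable subset whose characteristic matrix is irreducible. Then the set h(G,𝒪) of all solutions to the automorphism lifting problem above the characteristic matrix of 𝒪 is an abelian group under the Hadamard (entrywise) product, with identity element the characteristic matrix of 𝒪, and the inverse of A given by entrywise inversion on supp(A). -/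
open Matrix

/-!
Every group law is checked entrywise: if `A = L(gA)R*` and `B = L'(gB)R'*`, then
`A ∘ B = (LL')(g(A ∘ B))(RR')*` and `A⁻¹ = L⁻¹(gA⁻¹)(R⁻¹)*` entrywise, the products and inverses
of roots of unity being roots of unity again. The characteristic matrix of `𝒪` is a solution
with `L = R = 1` precisely because `𝒪` is `G`-stable.
-/

/-- `A` is a solution of the automorphism lifting problem above the characteristic matrix of
`O` (cf. Lemma `without cover`): its entries lie in μ_n on `O` and vanish off `O`, and for
every `g ∈ G` there are diagonal μ_n matrices `L(g)`, `R(g)` with `A = L(g)(gA)R(g)*`. -/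
def SolvesALP (n : ℕ) (G : Type*) {X Y : Type*} [Group G] [MulAction G X] [MulAction G Y]
    (O : Set (X × Y)) (A : Matrix X Y ℂ) : Prop :=
  (∀ x y, (x, y) ∈ O → (A x y) ^ n = 1) ∧ (∀ x y, (x, y) ∉ O → A x y = 0) ∧
  ∀ g : G, ∃ (L : X → ℂ) (R : Y → ℂ), (∀ x, (L x) ^ n = 1) ∧ (∀ y, (R y) ^ n = 1) ∧
    ∀ x y, A x y = L x * A (g⁻¹ • x) (g⁻¹ • y) * star (R y)

section VanishingOff

variable {X Y α : Type*} {O : Set (X × Y)} [DecidablePred (· ∈ O)] {A : Matrix X Y α}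

theorem hadamard_ite_one_of_eq_zero [MulZeroOneClass α] (hA : ∀ x y, (x, y) ∉ O → A x y = 0) :
    A ⊙ (of fun x y => if (x, y) ∈ O then (1 : α) else 0) = A := by
  ext x y
  by_cases h : (x, y) ∈ O
  · simp [h]
  · simp [h, hA x y h]

-- Relies on the junk value `0⁻¹ = 0`.
theorem map_inv_eq_ite_of_eq_zero [GroupWithZero α] (hA : ∀ x y, (x, y) ∉ O → A x y = 0) :
    A.map (·⁻¹) = of fun x y => if (x, y) ∈ O then (A x y)⁻¹ else 0 := by
  ext x y
  by_cases h : (x, y) ∈ O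
  · simp [h]
  · simp [h, hA x y h]

end VanishingOff

namespace SolvesALP

variable {n : ℕ} {G X Y : Type*} [Group G] [MulAction G X] [MulAction G Y]
  {O : Set (X × Y)} {A B : Matrix X Y ℂ}

theorem hadamard (hA : SolvesALP n G O A) (hB : SolvesALP n G O B) :
    SolvesALP n G O (A ⊙ B) := by
  obtain ⟨hA_pow, hA_zero, hA_eqv⟩ := hA
  obtain ⟨hB_pow, hB_zero, hB_eqv⟩ := hB
  refine ⟨fun x y h => by rw [hadamard_apply, mul_pow, hA_pow x y h, hB_pow x y h, one_mul],
    fun x y h => by rw [hadamard_apply, hA_zero x y h, zero_mul], fun g => ?_⟩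
  obtain ⟨L, R, hL, hR, hLR⟩ := hA_eqv g
  obtain ⟨L', R', hL', hR', hLR'⟩ := hB_eqv g
  refine ⟨L * L', R * R', fun x => by rw [Pi.mul_apply, mul_pow, hL, hL', one_mul],
    fun y => by rw [Pi.mul_apply, mul_pow, hR, hR', one_mul], fun x y => ?_⟩
  simp only [hadamard_apply, Pi.mul_apply, star_mul']
  rw [hLR x y, hLR' x y]
  ring

theorem map_inv (hA : SolvesALP n G O A) : SolvesALP n G O (A.map (·⁻¹)) := by
  obtain ⟨hA_pow, hA_zero, hA_eqv⟩ := hA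
  refine ⟨fun x y h => by rw [map_apply, inv_pow, hA_pow x y h, inv_one],
    fun x y h => by simp [hA_zero x y h], fun g => ?_⟩
  obtain ⟨L, R, hL, hR, hLR⟩ := hA_eqv g
  refine ⟨L⁻¹, R⁻¹, fun x => by rw [Pi.inv_apply, inv_pow, hL, inv_one],
    fun y => by rw [Pi.inv_apply, inv_pow, hR, inv_one], fun x y => ?_⟩
  rw [map_apply, map_apply, hLR x y, mul_inv, mul_inv, Pi.inv_apply, Pi.inv_apply, star_inv₀]

theorem ne_zero (hn : n ≠ 0) (hA : SolvesALP n G O A) {x : X} {y : Y} (h : (x, y) ∈ O) :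
    A x y ≠ 0 := fun h0 => by
  simpa [h0, zero_pow hn] using hA.1 x y h

variable [DecidablePred (· ∈ O)]

theorem hadamard_inv_on (hn : n ≠ 0) (hA : SolvesALP n G O A) :
    A ⊙ (of fun x y => if (x, y) ∈ O then (A x y)⁻¹ else 0) =
      of fun x y => if (x, y) ∈ O then (1 : ℂ) else 0 := by
  ext x y
  by_cases h : (x, y) ∈ O
  · simp [h, mul_inv_cancel₀ (hA.ne_zero hn h)]
  · simp [h]

end SolvesALP

theorem solvesALP_ite_one_of_stable {n : ℕ} {G X Y : Type*} [Group G] [MulAction G X] [MulAction G Y]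
    {O : Set (X × Y)} [DecidablePred (· ∈ O)]
    (hstable : ∀ (g : G) (p : X × Y), p ∈ O → (g • p.1, g • p.2) ∈ O) :
    SolvesALP n G O (of fun x y => if (x, y) ∈ O then (1 : ℂ) else 0) := by
  refine ⟨fun x y h => by simp [h], fun x y h => by simp [h],
    fun g => ⟨1, 1, fun _ => one_pow n, fun _ => one_pow n, fun x y => ?_⟩⟩
  have hmem : (x, y) ∈ O ↔ (g⁻¹ • x, g⁻¹ • y) ∈ O :=
    ⟨hstable g⁻¹ (x, y), fun h => by simpa using hstable g _ h⟩
  simp only [of_apply, Pi.one_apply, one_mul, star_one, mul_one]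
  exact if_congr hmem rfl rfl

theorem stmt_3_general {G X Y : Type*} [Group G]
    [MulAction G X] [MulAction G Y] (n : ℕ) (hn : 0 < n)
    (O : Set (X × Y)) [DecidablePred (· ∈ O)]
    (hstable : ∀ (g : G) (p : X × Y), p ∈ O → (g • p.1, g • p.2) ∈ O) :
    (∀ A B : Matrix X Y ℂ, SolvesALP n G O A → SolvesALP n G O B →
        SolvesALP n G O (Matrix.of fun x y => A x y * B x y)) ∧
    (∀ A B : Matrix X Y ℂ,
        (Matrix.of fun x y => A x y * B x y) = (Matrix.of fun x y => B x y * A x y)) ∧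
    SolvesALP n G O (Matrix.of fun x y => if (x, y) ∈ O then (1 : ℂ) else 0) ∧
    (∀ A : Matrix X Y ℂ, SolvesALP n G O A →
        (Matrix.of fun x y => A x y * (if (x, y) ∈ O then (1 : ℂ) else 0)) = A) ∧
    (∀ A : Matrix X Y ℂ, SolvesALP n G O A →
        SolvesALP n G O (Matrix.of fun x y => if (x, y) ∈ O then (A x y)⁻¹ else 0) ∧
        (Matrix.of fun x y => A x y * (if (x, y) ∈ O then (A x y)⁻¹ else 0)) =
          (Matrix.of fun x y => if (x, y) ∈ O then (1 : ℂ) else 0)) := by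
  refine ⟨fun A B hA hB => hA.hadamard hB, fun A B => hadamard_comm A B,
    solvesALP_ite_one_of_stable hstable, fun A hA => hadamard_ite_one_of_eq_zero hA.2.1, fun A hA => ?_⟩
  exact ⟨map_inv_eq_ite_of_eq_zero hA.2.1 ▸ hA.map_inv, hA.hadamard_inv_on hn.ne'⟩

/-- For a `G`-stable subset `O ⊆ X × Y` with irreducible characteristic matrix,
the set of solutions of the automorphism lifting problem above the characteristic matrix of
`O` is an abelian group under the Hadamard product: it is closed and commutative under it,
the characteristic matrix of `O` is the neutral element, and the entrywise inverse supported
on `O` is the group inverse. -/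
theorem stmt_3 {G X Y : Type*} [Group G] [Fintype G] [Fintype X] [Fintype Y]
    [MulAction G X] [MulAction G Y] (n : ℕ) (hn : 0 < n)
    (O : Set (X × Y)) [DecidablePred (· ∈ O)]
    (hstable : ∀ (g : G) (p : X × Y), p ∈ O → (g • p.1, g • p.2) ∈ O)
    (hirr : ¬ ∃ (I₁ : Set X) (J₁ : Set Y), I₁.Nonempty ∧ I₁ᶜ.Nonempty ∧ J₁.Nonempty ∧
        J₁ᶜ.Nonempty ∧ ∀ x y, (x, y) ∈ O → (x ∈ I₁ ∧ y ∈ J₁) ∨ (x ∈ I₁ᶜ ∧ y ∈ J₁ᶜ)) :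
    (∀ A B : Matrix X Y ℂ, SolvesALP n G O A → SolvesALP n G O B →
        SolvesALP n G O (Matrix.of fun x y => A x y * B x y)) ∧
    (∀ A B : Matrix X Y ℂ,
        (Matrix.of fun x y => A x y * B x y) = (Matrix.of fun x y => B x y * A x y)) ∧
    SolvesALP n G O (Matrix.of fun x y => if (x, y) ∈ O then (1 : ℂ) else 0) ∧
    (∀ A : Matrix X Y ℂ, SolvesALP n G O A →
        (Matrix.of fun x y => A x y * (if (x, y) ∈ O then (1 : ℂ) else 0)) = A) ∧
    (∀ A : Matrix X Y ℂ, SolvesALP n G O A →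
        SolvesALP n G O (Matrix.of fun x y => if (x, y) ∈ O then (A x y)⁻¹ else 0) ∧
        (Matrix.of fun x y => A x y * (if (x, y) ∈ O then (A x y)⁻¹ else 0)) =
          (Matrix.of fun x y => if (x, y) ∈ O then (1 : ℂ) else 0)) :=
  stmt_3_general n hn O hstable
end

section
/- With a monomial cover defined by homomorphisms ψ_X : H_X → μ_n and ψ_Y : H_Y → μ_n via the explicit 1-cocycle formula, a point (x,y) ∈ X × Y is orientable if and only if for every g ∈ g_x H_X g_x⁻¹ ∩ g_y H_Y g_y⁻¹ one has ψ_X(g_x⁻¹ g g_x) = ψ_Y(g_y⁻¹ g g_y). -/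
/-- For the monomial cover built from homomorphisms `ψ_X : H_X → μ_n`,
`ψ_Y : H_Y → μ_n` via the explicit 1-cocycle formula (with coset representatives
`g_x = rX x`, `g_y = rY y`, and the representative of `H q` being `rX (q⁻¹ • x₀)⁻¹`),
a point `(x, y)` is orientable iff for every `g ∈ g_x H_X g_x⁻¹ ∩ g_y H_Y g_y⁻¹` one has
`ψ_X(g_x⁻¹ g g_x) = ψ_Y(g_y⁻¹ g g_y)`.  The left side below is the orientability
condition: for every `g` fixing `x` and `y`, the sign of `x` equals the sign of `y`. -/
theorem stmt_9 {G X Y : Type*} [Group G] [MulAction G X] [MulAction G Y]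
    (n : ℕ) (hn : 0 < n) (x₀ : X) (y₀ : Y) (rX : X → G) (rY : Y → G)
    (hrX : ∀ x, rX x • x₀ = x) (hrY : ∀ y, rY y • y₀ = y)
    (ψX ψY : G → ℂ)
    (hψXhom : ∀ a ∈ MulAction.stabilizer G x₀, ∀ b ∈ MulAction.stabilizer G x₀,
        ψX (a * b) = ψX a * ψX b)
    (hψYhom : ∀ a ∈ MulAction.stabilizer G y₀, ∀ b ∈ MulAction.stabilizer G y₀,
        ψY (a * b) = ψY a * ψY b)
    (hψXn : ∀ a ∈ MulAction.stabilizer G x₀, (ψX a) ^ n = 1)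
    (hψYn : ∀ a ∈ MulAction.stabilizer G y₀, (ψY a) ^ n = 1)
    (x : X) (y : Y) :
    (∀ g : G, g • x = x → g • y = y →
        ψX ((rX x)⁻¹ * g * rX ((((rX x)⁻¹ * g)⁻¹) • x₀)) =
        ψY ((rY y)⁻¹ * g * rY ((((rY y)⁻¹ * g)⁻¹) • y₀))) ↔
    (∀ g : G, (rX x)⁻¹ * g * rX x ∈ MulAction.stabilizer G x₀ →
        (rY y)⁻¹ * g * rY y ∈ MulAction.stabilizer G y₀ →
        ψX ((rX x)⁻¹ * g * rX x) = ψY ((rY y)⁻¹ * g * rY y)) := by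
  have keyX : ∀ g : G, (g • x = x ↔ (rX x)⁻¹ * g * rX x ∈ MulAction.stabilizer G x₀) := by
    intro g
    rw [MulAction.mem_stabilizer_iff, mul_smul, mul_smul, hrX, inv_smul_eq_iff, hrX]
  have keyY : ∀ g : G, (g • y = y ↔ (rY y)⁻¹ * g * rY y ∈ MulAction.stabilizer G y₀) := by
    intro g
    rw [MulAction.mem_stabilizer_iff, mul_smul, mul_smul, hrY, inv_smul_eq_iff, hrY]
  have eqX : ∀ g : G, g • x = x → ((((rX x)⁻¹ * g)⁻¹) • x₀) = x := by
    intro g hg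
    rw [mul_inv_rev, inv_inv, mul_smul, hrX, inv_smul_eq_iff, hg]
  have eqY : ∀ g : G, g • y = y → ((((rY y)⁻¹ * g)⁻¹) • y₀) = y := by
    intro g hg
    rw [mul_inv_rev, inv_inv, mul_smul, hrY, inv_smul_eq_iff, hg]
  constructor
  · intro h g hgx hgy
    have hx := (keyX g).mpr hgx
    have hy := (keyY g).mpr hgy
    have := h g hx hy
    rwa [eqX g hx, eqY g hy] at this
  · intro h g hx hy
    rw [eqX g hx, eqY g hy]
    exact h g ((keyX g).mp hx) ((keyY g).mp hy)
end

section
/- Let (P,Q) be a monomial cover of a finite group G acting transitively on X and Y. Then the invariant space 𝒜_{P,Q}(X,Y) has a basis of μ_n⁺-valued matrices B₁,…,B_r whose supports are exactly the orientable G-orbits O₁,…,O_r in X×Y; in particular dim_ℂ 𝒜_{P,Q}(X,Y) equals the number of orientable orbits. -/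
/-!
Write `P g` and `Q g` as monomial matrices with coefficients `d g`, `e g`. Viewing `M` as
a function on `X × Y`, the condition `P g * M * (Q g)ᴴ = M` says `M (g • p) = c g p * M p` for the
cocycle `c g (x, y) = d g x * conj (e g y)`. Such an `M` is determined on each orbit by its value
at one point. That value can be propagated consistently along the orbit iff `c` is trivial on the
stabilizer of the point, which for roots of unity is the orientability condition
`P g x x = Q g y y`; on the other orbits the relation forces `M = 0`. The propagated functions of
the orientable orbits therefore form a basis, and their values `c g p` are `n`-th roots of unity.
-/

open Matrix ComplexConjugate

namespace MulAction

variable {G α K : Type*} [Group G] [MulAction G α] [Field K]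

def IsCocycle (c : G → α → K) : Prop :=
  ∀ g h a, c (g * h) a = c g (h • a) * c h a

def IsTwistedInvariant (c : G → α → K) (f : α → K) : Prop :=
  ∀ g a, f (g • a) = c g a * f a

def IsOrientable (c : G → α → K) (a : α) : Prop :=
  ∀ g, g • a = a → c g a = 1

open scoped Classical in
/-- Propagates the value `1` at `a` over the orbit of `a` along `c`; this is well defined, and
twisted-invariant, when `a` is orientable. -/
noncomputable def twistedIndicator (c : G → α → K) (a : α) (b : α) : K :=
  if h : ∃ g : G, g • a = b then c h.choose a else 0

variable {c : G → α → K} {a b : α}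

theorem IsCocycle.apply_eq_of_smul_eq (hc : IsCocycle c) (ha : IsOrientable c a) {g g' : G}
    (h : g • a = g' • a) : c g a = c g' a := by
  have hfix : (g'⁻¹ * g) • a = a := by rw [mul_smul, h, inv_smul_smul]
  have := hc g' (g'⁻¹ * g) a
  rwa [mul_inv_cancel_left, hfix, ha _ hfix, mul_one] at this

theorem twistedIndicator_smul_self (hc : IsCocycle c) (ha : IsOrientable c a) (g : G) :
    twistedIndicator c a (g • a) = c g a := by
  have h : ∃ g' : G, g' • a = g • a := ⟨g, rfl⟩
  rw [twistedIndicator, dif_pos h]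
  exact hc.apply_eq_of_smul_eq ha h.choose_spec

theorem twistedIndicator_self (ha : IsOrientable c a) : twistedIndicator c a a = 1 := by
  have h : ∃ g : G, g • a = a := ⟨1, one_smul G a⟩
  rw [twistedIndicator, dif_pos h, ha _ h.choose_spec]

theorem twistedIndicator_of_notMem_orbit (hb : b ∉ orbit G a) : twistedIndicator c a b = 0 :=
  dif_neg hb

theorem isTwistedInvariant_twistedIndicator (hc : IsCocycle c) (ha : IsOrientable c a) :
    IsTwistedInvariant c (twistedIndicator c a) := by
  intro g b
  by_cases hb : b ∈ orbit G a
  · obtain ⟨g₀, rfl⟩ := hb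
    rw [smul_smul, twistedIndicator_smul_self hc ha, twistedIndicator_smul_self hc ha, hc]
  · have hgb : g • b ∉ orbit G a := by
      rwa [mem_orbit_symm, orbit_smul, ← mem_orbit_symm]
    rw [twistedIndicator_of_notMem_orbit hb, twistedIndicator_of_notMem_orbit hgb, mul_zero]

namespace IsTwistedInvariant

variable {f : α → K}

theorem apply_eq_zero_of_smul (hf : IsTwistedInvariant c f) {g : G} (h : f (g • b) = 0) :
    f b = 0 := by
  rw [← inv_smul_smul g b, hf, h, mul_zero]

theorem apply_eq_zero_of_not_isOrientable (hf : IsTwistedInvariant c f)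
    (hb : ¬IsOrientable c b) : f b = 0 := by
  obtain ⟨g, hgb, hne⟩ := not_forall₂.mp hb
  have h : (c g b - 1) * f b = 0 := by rw [sub_mul, one_mul, ← hf, hgb, sub_self]
  exact (mul_eq_zero.mp h).resolve_left (sub_ne_zero.mpr hne)

theorem apply_eq_zero_of_mem_orbit (hf : IsTwistedInvariant c f) (hab : a ∈ orbit G b)
    (ha : ¬IsOrientable c a) : f b = 0 := by
  obtain ⟨g, rfl⟩ := hab
  exact hf.apply_eq_zero_of_smul (hf.apply_eq_zero_of_not_isOrientable ha)

theorem apply_eq_mul_twistedIndicator (hc : IsCocycle c) (hf : IsTwistedInvariant c f)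
    (ha : IsOrientable c a) (hb : b ∈ orbit G a) : f b = f a * twistedIndicator c a b := by
  obtain ⟨g, rfl⟩ := hb
  rw [hf, twistedIndicator_smul_self hc ha, mul_comm]

end IsTwistedInvariant

theorem mk_eq_iff_mem_orbit_out {a : α} {ω : Quotient (orbitRel G α)} :
    Quotient.mk (orbitRel G α) a = ω ↔ a ∈ orbit G ω.out :=
  Quotient.mk_eq_iff_out

variable (c) in
abbrev OrientableOrbit : Type _ :=
  {ω : Quotient (orbitRel G α) // ∀ a, Quotient.mk (orbitRel G α) a = ω → IsOrientable c a}

theorem OrientableOrbit.isOrientable_out (ω : OrientableOrbit c) : IsOrientable c ω.1.out :=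
  ω.2 _ (Quotient.out_eq _)

variable (c) in
noncomputable def orientableOrbitIndicator (ω : OrientableOrbit c) : α → K :=
  twistedIndicator c ω.1.out

theorem orientableOrbitIndicator_of_mk_ne {ω : OrientableOrbit c}
    (h : Quotient.mk (orbitRel G α) b ≠ ω.1) : orientableOrbitIndicator c ω b = 0 :=
  twistedIndicator_of_notMem_orbit (mt mk_eq_iff_mem_orbit_out.mpr h)

theorem orientableOrbitIndicator_pow_eq_one (hc : IsCocycle c) {n : ℕ}
    (hcn : ∀ g a, c g a ^ n = 1) {ω : OrientableOrbit c}
    (hb : Quotient.mk (orbitRel G α) b = ω.1) : orientableOrbitIndicator c ω b ^ n = 1 := by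
  obtain ⟨g, rfl⟩ := mk_eq_iff_mem_orbit_out.mp hb
  rw [orientableOrbitIndicator, twistedIndicator_smul_self hc ω.isOrientable_out, hcn]

theorem linearIndependent_orientableOrbitIndicator :
    LinearIndependent K (orientableOrbitIndicator c) := by
  classical
  let eval : (α → K) →ₗ[K] OrientableOrbit c → K :=
    LinearMap.pi fun ω => LinearMap.proj ω.1.out
  refine .of_comp eval ?_
  convert Pi.linearIndependent_single_one (OrientableOrbit c) K with ω
  ext ω'
  by_cases h : ω' = ω
  · subst h
    simpa [eval, orientableOrbitIndicator] using twistedIndicator_self ω'.isOrientable_out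
  · rw [Pi.single_eq_of_ne h]
    exact orientableOrbitIndicator_of_mk_ne fun h' =>
      h (Subtype.ext ((Quotient.out_eq _).symm.trans h'))

theorem IsTwistedInvariant.mem_span_orientableOrbitIndicator [Finite α] (hc : IsCocycle c)
    {f : α → K} (hf : IsTwistedInvariant c f) :
    f ∈ Submodule.span K (Set.range (orientableOrbitIndicator c)) := by
  classical
  have := Fintype.ofFinite (OrientableOrbit c)
  refine (Submodule.mem_span_range_iff_exists_fun K).mpr ⟨fun ω => f ω.1.out, ?_⟩
  funext b
  simp only [Finset.sum_apply, Pi.smul_apply, smul_eq_mul]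
  by_cases hb : ∀ a, Quotient.mk (orbitRel G α) a = Quotient.mk (orbitRel G α) b →
      IsOrientable c a
  · let ω₀ : OrientableOrbit c := ⟨_, hb⟩
    rw [Finset.sum_eq_single ω₀ (fun ω _ hω => by
      rw [orientableOrbitIndicator_of_mk_ne fun h => hω (Subtype.ext h.symm), mul_zero])
      (fun h => absurd (Finset.mem_univ ω₀) h)]
    exact (hf.apply_eq_mul_twistedIndicator hc ω₀.isOrientable_out
      (mk_eq_iff_mem_orbit_out.mp rfl)).symm
  · push Not at hb
    obtain ⟨a, hab, ha⟩ := hb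
    rw [hf.apply_eq_zero_of_mem_orbit (Quotient.exact hab) ha]
    refine Finset.sum_eq_zero fun ω _ => ?_
    rw [orientableOrbitIndicator_of_mk_ne fun h => ha (ω.2 a (hab.trans h)), mul_zero]

end MulAction

open MulAction

section Monomial

variable {G X Y K : Type*} [Field K] [StarRing K]

def monomialCocycle (d : G → X → K) (e : G → Y → K) (g : G) (p : X × Y) : K :=
  d g p.1 * star (e g p.2)

theorem monomialCocycle_pow_eq_one {d : G → X → K} {e : G → Y → K} {n : ℕ}
    (hd : ∀ g j, d g j ^ n = 1) (he : ∀ g j, e g j ^ n = 1) (g : G) (p : X × Y) :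
    monomialCocycle d e g p ^ n = 1 := by
  rw [monomialCocycle, mul_pow, ← star_pow, hd, he, star_one, mul_one]

variable [Group G] [MulAction G X] [MulAction G Y]

theorem monomial_coeff_mul [Fintype X] [DecidableEq X] {R : Type*} [Semiring R]
    {P : G → Matrix X X R} {d : G → X → R} (hPmul : ∀ a b, P (a * b) = P a * P b)
    (hPd : ∀ g i j, P g i j = if i = g • j then d g j else 0) (a b : G) (j : X) :
    d (a * b) j = d a (b • j) * d b j := by
  have h := congrFun (congrFun (hPmul a b) ((a * b) • j)) j
  simpa [hPd, Matrix.mul_apply, mul_smul, ite_mul, Finset.sum_ite_eq] using h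

theorem monomial_mul_mul_conjTranspose_smul_apply [Fintype X] [Fintype Y] [DecidableEq X]
    [DecidableEq Y] {R : Type*} [CommSemiring R] [StarRing R]
    {g : G} {P : Matrix X X R} {Q : Matrix Y Y R} {d : X → R} {e : Y → R}
    (hPd : ∀ i j, P i j = if i = g • j then d j else 0)
    (hQe : ∀ i j, Q i j = if i = g • j then e j else 0) (M : Matrix X Y R) (x : X) (y : Y) :
    (P * M * Qᴴ) (g • x) (g • y) = d x * star (e y) * M x y := by
  simp only [Matrix.mul_apply, Matrix.conjTranspose_apply, hPd, hQe, smul_left_cancel_iff,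
    apply_ite star, star_zero, ite_mul, mul_ite, zero_mul, mul_zero, Finset.sum_ite_eq,
    Finset.mem_univ, if_true]
  ring

theorem isCocycle_monomialCocycle {d : G → X → K} {e : G → Y → K}
    (hd : ∀ a b j, d (a * b) j = d a (b • j) * d b j)
    (he : ∀ a b j, e (a * b) j = e a (b • j) * e b j) :
    IsCocycle (monomialCocycle d e) := by
  intro g h p
  simp only [monomialCocycle, hd, he, star_mul, Prod.smul_fst, Prod.smul_snd]
  ring

theorem monomial_invariant_iff_isTwistedInvariant [Fintype X] [Fintype Y] [DecidableEq X]
    [DecidableEq Y] {P : G → Matrix X X K} {Q : G → Matrix Y Y K} {d : G → X → K}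
    {e : G → Y → K} (hPd : ∀ g i j, P g i j = if i = g • j then d g j else 0)
    (hQe : ∀ g i j, Q g i j = if i = g • j then e g j else 0) (M : Matrix X Y K) :
    (∀ g, P g * M * (Q g)ᴴ = M) ↔
      IsTwistedInvariant (monomialCocycle d e) (Function.uncurry M) := by
  have hentry := fun g => monomial_mul_mul_conjTranspose_smul_apply (hPd g) (hQe g) M
  constructor
  · intro h g p
    exact (congrFun (congrFun (h g) _) _).symm.trans (hentry g p.1 p.2)
  · intro h g
    ext x y
    obtain ⟨x, rfl⟩ := MulAction.surjective g x
    obtain ⟨y, rfl⟩ := MulAction.surjective g y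
    exact (hentry g x y).trans (h g (x, y)).symm

theorem Complex.mul_conj_eq_one_iff {z w : ℂ} (hw : ‖w‖ = 1) : z * conj w = 1 ↔ z = w := by
  rw [← Complex.inv_eq_conj hw, mul_inv_eq_one₀ (norm_ne_zero_iff.mp (hw ▸ one_ne_zero))]

theorem isOrientable_monomialCocycle_iff [DecidableEq X] [DecidableEq Y]
    {P : G → Matrix X X ℂ} {Q : G → Matrix Y Y ℂ} {d : G → X → ℂ} {e : G → Y → ℂ}
    (hPd : ∀ g i j, P g i j = if i = g • j then d g j else 0)
    (hQe : ∀ g i j, Q g i j = if i = g • j then e g j else 0)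
    (he : ∀ g j, ‖e g j‖ = 1) (p : X × Y) :
    IsOrientable (monomialCocycle d e) p ↔
      ∀ g : G, g • p.1 = p.1 → g • p.2 = p.2 → P g p.1 p.1 = Q g p.2 p.2 := by
  refine forall_congr' fun g => ?_
  simp only [Prod.ext_iff, Prod.smul_fst, Prod.smul_snd, and_imp]
  refine imp_congr_right fun hx => imp_congr_right fun hy => ?_
  rw [hPd, hQe, if_pos hx.symm, if_pos hy.symm, monomialCocycle, Complex.star_def,
    Complex.mul_conj_eq_one_iff (he g p.2)]

end Monomial

theorem stmt_14_general {G X Y : Type*} [Group G] [Fintype X] [Fintype Y]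
    [DecidableEq X] [DecidableEq Y] [MulAction G X] [MulAction G Y]
    (n : ℕ) (hn : 0 < n)
    (P : G → Matrix X X ℂ) (Q : G → Matrix Y Y ℂ)
    (hPmul : ∀ a b : G, P (a * b) = P a * P b) (hQmul : ∀ a b : G, Q (a * b) = Q a * Q b)
    (hP : ∀ g : G, ∃ d : X → ℂ, (∀ x, (d x) ^ n = 1) ∧
        ∀ i j, P g i j = if i = g • j then d j else 0)
    (hQ : ∀ g : G, ∃ d : Y → ℂ, (∀ y, (d y) ^ n = 1) ∧
        ∀ i j, Q g i j = if i = g • j then d j else 0) :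
    ∃ B : {ω : Quotient (MulAction.orbitRel G (X × Y)) //
        ∀ p : X × Y, Quotient.mk (MulAction.orbitRel G (X × Y)) p = ω →
          ∀ g : G, g • p.1 = p.1 → g • p.2 = p.2 → P g p.1 p.1 = Q g p.2 p.2} →
          Matrix X Y ℂ,
      (∀ ω, ∀ g : G, P g * B ω * (Q g)ᴴ = B ω) ∧
      (∀ ω (p : X × Y), Quotient.mk (MulAction.orbitRel G (X × Y)) p = ω.1 →
          (B ω p.1 p.2) ^ n = 1) ∧
      (∀ ω (p : X × Y), Quotient.mk (MulAction.orbitRel G (X × Y)) p ≠ ω.1 →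
          B ω p.1 p.2 = 0) ∧
      LinearIndependent ℂ B ∧
      (∀ M : Matrix X Y ℂ, (∀ g : G, P g * M * (Q g)ᴴ = M) →
          M ∈ Submodule.span ℂ (Set.range B)) := by
  choose d hdn hPd using hP
  choose e hen hQe using hQ
  set c := monomialCocycle d e
  have hc : IsCocycle c :=
    isCocycle_monomialCocycle (monomial_coeff_mul hPmul hPd) (monomial_coeff_mul hQmul hQe)
  have hinv := monomial_invariant_iff_isTwistedInvariant hPd hQe
  have he : ∀ g y, ‖e g y‖ = 1 := fun g y => Complex.norm_eq_one_of_pow_eq_one (hen g y) hn.ne'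
  let ι : OrientableOrbit c ≃ _ :=
    Equiv.subtypeEquivRight fun ω : Quotient (orbitRel G (X × Y)) =>
      forall₂_congr fun p (_ : Quotient.mk _ p = ω) =>
        isOrientable_monomialCocycle_iff hPd hQe he p
  let toMatrix := (LinearEquiv.curry ℂ ℂ X Y).trans (Matrix.ofLinearEquiv ℂ)
  let B := fun ω => toMatrix (orientableOrbitIndicator c (ι.symm ω))
  refine ⟨B, fun ω => ?_, fun ω p hp => ?_,
    fun ω p hp => orientableOrbitIndicator_of_mk_ne hp, ?_, fun M hM => ?_⟩
  · exact (hinv _).mpr (isTwistedInvariant_twistedIndicator hc (ι.symm ω).isOrientable_out)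
  · exact orientableOrbitIndicator_pow_eq_one hc (monomialCocycle_pow_eq_one hdn hen) hp
  · exact ((linearIndependent_orientableOrbitIndicator (K := ℂ)).map' toMatrix.toLinearMap
      toMatrix.ker).comp ι.symm ι.symm.injective
  · have hrange : Set.range B = toMatrix '' Set.range (orientableOrbitIndicator c) := by
      rw [← Set.range_comp, ← ι.symm.surjective.range_comp]
      rfl
    rw [hrange]
    exact Submodule.apply_mem_span_image_of_mem_span toMatrix.toLinearMap
      (((hinv M).mp hM).mem_span_orientableOrbitIndicator hc)

/-- For a monomial cover `(P, Q)` of a group `G` acting transitively on `X`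
and `Y`, the invariant space `𝒜_{P,Q}(X,Y)` has a basis of μ_n⁺-valued matrices indexed by
the orientable `G`-orbits in `X × Y`, where the matrix attached to an orientable orbit is
supported exactly on that orbit; in particular the dimension equals the number of
orientable orbits. -/
theorem stmt_14 {G X Y : Type*} [Group G] [Fintype G] [Fintype X] [Fintype Y]
    [DecidableEq X] [DecidableEq Y] [MulAction G X] [MulAction G Y]
    [MulAction.IsPretransitive G X] [MulAction.IsPretransitive G Y]
    (n : ℕ) (hn : 0 < n)
    (P : G → Matrix X X ℂ) (Q : G → Matrix Y Y ℂ)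
    (hPmul : ∀ a b : G, P (a * b) = P a * P b) (hQmul : ∀ a b : G, Q (a * b) = Q a * Q b)
    (hP : ∀ g : G, ∃ d : X → ℂ, (∀ x, (d x) ^ n = 1) ∧
        ∀ i j, P g i j = if i = g • j then d j else 0)
    (hQ : ∀ g : G, ∃ d : Y → ℂ, (∀ y, (d y) ^ n = 1) ∧
        ∀ i j, Q g i j = if i = g • j then d j else 0) :
    ∃ B : {ω : Quotient (MulAction.orbitRel G (X × Y)) //
        ∀ p : X × Y, Quotient.mk (MulAction.orbitRel G (X × Y)) p = ω →
          ∀ g : G, g • p.1 = p.1 → g • p.2 = p.2 → P g p.1 p.1 = Q g p.2 p.2} →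
          Matrix X Y ℂ,
      (∀ ω, ∀ g : G, P g * B ω * (Q g)ᴴ = B ω) ∧
      (∀ ω (p : X × Y), Quotient.mk (MulAction.orbitRel G (X × Y)) p = ω.1 →
          (B ω p.1 p.2) ^ n = 1) ∧
      (∀ ω (p : X × Y), Quotient.mk (MulAction.orbitRel G (X × Y)) p ≠ ω.1 →
          B ω p.1 p.2 = 0) ∧
      LinearIndependent ℂ B ∧
      (∀ M : Matrix X Y ℂ, (∀ g : G, P g * M * (Q g)ᴴ = M) →
          M ∈ Submodule.span ℂ (Set.range B)) :=
  stmt_14_general n hn P Q hPmul hQmul hP hQ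
end

section
/- Let (P,Q) be a monomial cover of G with |X| = |Y|, and suppose the algebra 𝒜_P(X) of (P,P)-invariant X×X matrices is one-dimensional (i.e., consists of scalar matrices). Then every matrix A in the invariant space 𝒜_{P,Q}(X,Y) satisfies A A* = c·I for some scalar c; in particular any such A with entries in μ_n⁺ is a generalized weighing matrix. -/
open Matrix

/-- If `(P, Q)` is a monomial cover with `|X| = |Y|` and the algebra of
`(P,P)`-invariant matrices is one-dimensional (consists of scalar matrices), then every
`(P,Q)`-invariant matrix `A` satisfies `A A* = c·I`; in particular any such matrix with
entries in μ_n⁺ is a generalized weighing matrix. -/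
theorem stmt_15 {G X Y : Type*} [Group G] [Fintype X] [Fintype Y]
    [DecidableEq X] [DecidableEq Y] [MulAction G X] [MulAction G Y]
    (n : ℕ) (hn : 0 < n) (hcard : Fintype.card X = Fintype.card Y)
    (P : G → Matrix X X ℂ) (Q : G → Matrix Y Y ℂ)
    (hPmul : ∀ a b : G, P (a * b) = P a * P b) (hQmul : ∀ a b : G, Q (a * b) = Q a * Q b)
    (hP : ∀ g : G, ∃ d : X → ℂ, (∀ x, (d x) ^ n = 1) ∧
        ∀ i j, P g i j = if i = g • j then d j else 0)
    (hQ : ∀ g : G, ∃ d : Y → ℂ, (∀ y, (d y) ^ n = 1) ∧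
        ∀ i j, Q g i j = if i = g • j then d j else 0)
    (h1dim : ∀ M : Matrix X X ℂ, (∀ g : G, P g * M * (P g)ᴴ = M) →
        ∃ c : ℂ, M = c • (1 : Matrix X X ℂ)) :
    ∀ A : Matrix X Y ℂ, (∀ g : G, P g * A * (Q g)ᴴ = A) →
      ∃ c : ℂ, A * Aᴴ = c • (1 : Matrix X X ℂ) := by
  intro A hA
  -- Q g is unitary: (Q g)ᴴ * Q g = 1
  have hQunit : ∀ g : G, (Q g)ᴴ * Q g = 1 := by
    intro g
    obtain ⟨d, hd, hQg⟩ := hQ g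
    have hdd : ∀ y, (starRingEnd ℂ) (d y) * d y = 1 := by
      intro y
      have hnorm : ‖d y‖ = 1 := by
        have h1 : ‖d y‖ ^ n = 1 ^ n := by rw [← norm_pow, hd y, norm_one, one_pow]
        exact pow_left_inj₀ (norm_nonneg _) zero_le_one (by omega) |>.mp h1
      have := Complex.mul_conj' (d y)
      rw [mul_comm] at this
      rw [this, hnorm]
      norm_num
    ext j k
    simp only [Matrix.mul_apply, Matrix.conjTranspose_apply, Matrix.one_apply, hQg,
      Matrix.one_apply]
    rw [Finset.sum_eq_single (g • j)]
    · by_cases h : j = k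
      · subst h; simp [hdd j]
      · have : ¬ g • j = g • k := fun hc => h (smul_left_cancel g hc)
        simp [this, h]
    · intro i _ hi
      simp [if_neg hi]
    · simp
  have key : ∀ g : G, P g * (A * Aᴴ) * (P g)ᴴ = A * Aᴴ := by
    intro g
    have e : P g * (A * Aᴴ) * (P g)ᴴ = (P g * A * (Q g)ᴴ) * (P g * A * (Q g)ᴴ)ᴴ := by
      rw [show ((P g * A * (Q g)ᴴ) * (P g * A * (Q g)ᴴ)ᴴ : Matrix X X ℂ) =
          (P g * A) * ((Q g)ᴴ * Q g) * Aᴴ * (P g)ᴴ by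
        simp only [Matrix.conjTranspose_mul, Matrix.conjTranspose_conjTranspose,
          Matrix.mul_assoc], hQunit g, Matrix.mul_one]
      simp only [Matrix.mul_assoc]
    rw [e, hA g]
  exact h1dim (A * Aᴴ) key
end

section
/- Let G be a finite group, 𝒪 ⊆ G×G a G-stable subset (under the diagonal left-translation action) with irreducible characteristic matrix, ω ∈ Z²(G,μ_n) a 2-cocycle, and A the cocyclic matrix A_{x,y} = K_{x,y}·ω(x⁻¹,y) for (x,y) ∈ 𝒪 (zero elsewhere), where K is G-invariant. Then for every g ∈ G there are diagonal monomial matrices: A = P(g) A Q(g)* with P(g) = diag(ω(x⁻¹,g)*)·p_X(g) and Q(g) = diag(ω(g,g⁻¹y)*)·p_Y(g); i.e., cocyclic matrices are cohomology-developed. -/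
open Matrix

/-! Left-multiplying by `P(g)` and right-multiplying by `Q(g)ᴴ` sends `A` to the matrix with
entries `ω(x⁻¹, g) A_{g⁻¹x, g⁻¹y} ω(g, g⁻¹y)⁻¹` (the values of `ω` are roots of unity, so
conjugation is inversion). By G-invariance of `K` and `𝒪` this is `A_{x,y}` times
`ω(x⁻¹, g) ω(x⁻¹g, g⁻¹y) ω(g, g⁻¹y)⁻¹ ω(x⁻¹, y)⁻¹`, which is `1` by the cocycle condition
at `(x⁻¹, g, g⁻¹y)`. -/

theorem Complex.star_eq_inv_of_pow_eq_one {z : ℂ} {n : ℕ} (hz : z ^ n = 1) (hn : 0 < n) :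
    star z = z⁻¹ :=
  (Complex.inv_eq_conj (Complex.norm_eq_one_of_pow_eq_one hz hn.ne')).symm

section Monomial

variable {G R : Type*} [Group G] [Fintype G] [DecidableEq G]

theorem Matrix.of_translate_mul_apply [NonUnitalNonAssocSemiring R] (g : G) (d : G → R)
    (M : Matrix G G R) (x y : G) :
    ((of fun x x' : G => if x = g * x' then d x else 0) * M) x y = d x * M (g⁻¹ * x) y := by
  rw [mul_apply, Finset.sum_eq_single (g⁻¹ * x)]
  · simp
  · intro x' _ hx'
    rw [of_apply, if_neg (by rintro rfl; simp at hx'), zero_mul]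
  · simp

theorem Matrix.mul_conjTranspose_of_translate_apply [NonUnitalNonAssocSemiring R] [StarRing R]
    (g : G) (e : G → R) (M : Matrix G G R) (x y : G) :
    (M * (of fun y y' : G => if y = g * y' then e y else 0)ᴴ) x y =
      M x (g⁻¹ * y) * star (e y) := by
  rw [mul_apply, Finset.sum_eq_single (g⁻¹ * y)]
  · simp
  · intro y' _ hy'
    rw [conjTranspose_apply, of_apply, if_neg (by rintro rfl; simp at hy'), star_zero, mul_zero]
  · simp

end Monomial

theorem cocycle_translate {G M : Type*} [Group G] [Mul M] {ω : G → G → M}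
    (hcoc : ∀ g₁ g₂ g₃ : G, ω g₂ g₃ * ω g₁ (g₂ * g₃) = ω (g₁ * g₂) g₃ * ω g₁ g₂) (g x y : G) :
    ω (g⁻¹ * x)⁻¹ (g⁻¹ * y) * ω x⁻¹ g = ω g (g⁻¹ * y) * ω x⁻¹ y := by
  simpa using (hcoc x⁻¹ g (g⁻¹ * y)).symm

theorem mem_translate_iff {G : Type*} [Group G] {O : Set (G × G)}
    (hO : ∀ (g : G) (p : G × G), p ∈ O → (g * p.1, g * p.2) ∈ O) (g x y : G) :
    (g⁻¹ * x, g⁻¹ * y) ∈ O ↔ (x, y) ∈ O :=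
  ⟨fun h => by simpa using hO g _ h, hO g⁻¹ (x, y)⟩

theorem cocyclic_entry_translate {G : Type*} [Group G] {ω : G → G → ℂ}
    (hcoc : ∀ g₁ g₂ g₃ : G, ω g₂ g₃ * ω g₁ (g₂ * g₃) = ω (g₁ * g₂) g₃ * ω g₁ g₂)
    {K : Matrix G G ℂ} (hK : ∀ g x y : G, K (g⁻¹ * x) (g⁻¹ * y) = K x y)
    {O : Set (G × G)} [DecidablePred (· ∈ O)]
    (hO : ∀ (g : G) (p : G × G), p ∈ O → (g * p.1, g * p.2) ∈ O) (g x y : G) :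
    ω x⁻¹ g * (if (g⁻¹ * x, g⁻¹ * y) ∈ O then K (g⁻¹ * x) (g⁻¹ * y) * ω (g⁻¹ * x)⁻¹ (g⁻¹ * y)
      else 0) = (if (x, y) ∈ O then K x y * ω x⁻¹ y else 0) * ω g (g⁻¹ * y) := by
  simp only [mem_translate_iff hO, hK]
  split_ifs
  · linear_combination K x y * cocycle_translate hcoc g x y
  · simp

theorem stmt_19_general {G : Type*} [Group G] [Fintype G] [DecidableEq G] (n : ℕ) (hn : 0 < n)
    (ω : G → G → ℂ) (hωn : ∀ a b : G, (ω a b) ^ n = 1)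
    (hcoc : ∀ g₁ g₂ g₃ : G, ω g₂ g₃ * ω g₁ (g₂ * g₃) = ω (g₁ * g₂) g₃ * ω g₁ g₂)
    (K : Matrix G G ℂ) (hK : ∀ g x y : G, K (g⁻¹ * x) (g⁻¹ * y) = K x y)
    (O : Set (G × G)) [DecidablePred (· ∈ O)]
    (hO : ∀ (g : G) (p : G × G), p ∈ O → (g * p.1, g * p.2) ∈ O)
    (A : Matrix G G ℂ)
    (hA : ∀ x y : G, A x y = if (x, y) ∈ O then K x y * ω x⁻¹ y else 0) :
    ∀ g : G,
      (Matrix.of fun x x' : G => if x = g * x' then ω x⁻¹ g else 0) * A *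
        (Matrix.of fun y y' : G => if y = g * y' then ω g (g⁻¹ * y) else 0)ᴴ = A := by
  intro g
  ext x y
  have hω_ne : ω g (g⁻¹ * y) ≠ 0 := fun h => by simpa [h, hn.ne'] using hωn g (g⁻¹ * y)
  rw [mul_conjTranspose_of_translate_apply, of_translate_mul_apply, hA, hA,
    Complex.star_eq_inv_of_pow_eq_one (hωn _ _) hn, mul_inv_eq_iff_eq_mul₀ hω_ne]
  exact cocyclic_entry_translate hcoc hK hO g x y

/-- Cocyclic matrices are cohomology-developed.  For a 2-cocycle ω with
values in μ_n, a G-invariant K, and the cocyclic matrix `A_{x,y} = K_{x,y} ω(x⁻¹, y)`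
supported on a G-stable `𝒪` with irreducible characteristic matrix, for every `g` the
monomial matrices `P(g) = diag_x(ω(x⁻¹, g))·p_X(g)` and `Q(g) = diag_y(ω(g, g⁻¹y))·p_Y(g)`
(with `p_X(g), p_Y(g)` the permutation matrices of left translation by `g`) satisfy
`P(g) A Q(g)* = A`. -/
theorem stmt_19 {G : Type*} [Group G] [Fintype G] [DecidableEq G] (n : ℕ) (hn : 0 < n)
    (ω : G → G → ℂ) (hωn : ∀ a b : G, (ω a b) ^ n = 1)
    (hcoc : ∀ g₁ g₂ g₃ : G, ω g₂ g₃ * ω g₁ (g₂ * g₃) = ω (g₁ * g₂) g₃ * ω g₁ g₂)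
    (K : Matrix G G ℂ) (hK : ∀ g x y : G, K (g⁻¹ * x) (g⁻¹ * y) = K x y)
    (O : Set (G × G)) [DecidablePred (· ∈ O)]
    (hO : ∀ (g : G) (p : G × G), p ∈ O → (g * p.1, g * p.2) ∈ O)
    (hirr : ¬ ∃ I₁ J₁ : Set G, I₁.Nonempty ∧ I₁ᶜ.Nonempty ∧ J₁.Nonempty ∧ J₁ᶜ.Nonempty ∧
        ∀ x y : G, (x, y) ∈ O → (x ∈ I₁ ∧ y ∈ J₁) ∨ (x ∈ I₁ᶜ ∧ y ∈ J₁ᶜ))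
    (A : Matrix G G ℂ)
    (hA : ∀ x y : G, A x y = if (x, y) ∈ O then K x y * ω x⁻¹ y else 0) :
    ∀ g : G,
      (Matrix.of fun x x' : G => if x = g * x' then ω x⁻¹ g else 0) * A *
        (Matrix.of fun y y' : G => if y = g * y' then ω g (g⁻¹ * y) else 0)ᴴ = A :=
  stmt_19_general n hn ω hωn hcoc K hK O hO A hA
end
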